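/- Let h be a Lie algebra automorphism of gl^M_∞ and suppose there is a linear equivalence g : V ≃ V witnessing an isomorphism of twisted modules V^h ≅ V_*, i.e. j(g((h φ)(v))) = −φ*(j(g(v))) for all φ ∈ gl^M_∞ and v ∈ V. Then there exists a linear equivalence f : V ≃ V whose dual map f* maps V_* onto V_*, such that (τ ∘ h)(φ) = f⁻¹ ∘ φ ∘ f for all φ ∈ gl^M_∞. -/

import Mathlib

/-!
Testing the twisted isomorphism `g` on rank-one operators `u ↦ B u y • x` shows that `g` and
`g⁻¹` both have `B`-transposes, i.e. lie in `gl^M_∞`. Take `f := (g⁻¹)ᵀ`, so that `f⁻¹ = gᵀ`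
and `f*` acts on `V_* = j(V)` as `j ∘ g⁻¹ ∘ j⁻¹`. The hypothesis says `g ∘ h φ = -φᵀ ∘ g`, and
transposing it gives `τ (h φ) = -(h φ)ᵀ = f⁻¹ ∘ φ ∘ f`.
-/

open TensorProduct

attribute [local instance 100] LieRing.ofAssociativeRing

variable {U W : Type*} [AddCommGroup U] [Module ℂ U] [AddCommGroup W] [Module ℂ W]

/-- The Mackey Lie algebra `gl^M_{U,W}`: all `φ ∈ End ℂ U` whose dual map preserves
`W̃ = range (B.flip) ⊆ U*`. -/
noncomputable def glMackey (B : U →ₗ[ℂ] W →ₗ[ℂ] ℂ) :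
    LieSubalgebra ℂ (Module.End ℂ U) where
  carrier := {φ | ∀ ξ ∈ LinearMap.range B.flip, φ.dualMap ξ ∈ LinearMap.range B.flip}
  add_mem' := by
    intro a b ha hb ξ hξ
    have h : (a + b).dualMap ξ = a.dualMap ξ + b.dualMap ξ := by ext x; simp
    rw [h]
    exact Submodule.add_mem _ (ha ξ hξ) (hb ξ hξ)
  zero_mem' := by
    intro ξ hξ
    have h : (0 : Module.End ℂ U).dualMap ξ = 0 := by ext x; simp
    rw [h]; exact Submodule.zero_mem _
  smul_mem' := by
    intro c a ha ξ hξ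
    have h : (c • a).dualMap ξ = c • a.dualMap ξ := by ext x; simp
    rw [h]
    exact Submodule.smul_mem _ _ (ha ξ hξ)
  lie_mem' := by
    intro a b ha hb ξ hξ
    have h : (⁅a, b⁆ : Module.End ℂ U).dualMap ξ
        = b.dualMap (a.dualMap ξ) - a.dualMap (b.dualMap ξ) := by
      ext x; simp [Module.End.lie_apply]
    rw [h]
    exact Submodule.sub_mem _ (hb _ (ha ξ hξ)) (ha _ (hb ξ hξ))

/-- `V = ℕ →₀ ℂ`, the countable-dimensional standard space. -/
abbrev Vst : Type := ℕ →₀ ℂ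

/-- The standard nondegenerate pairing `B x y = ∑ i, x i * y i` on `V`. -/
noncomputable def Bstd : Vst →ₗ[ℂ] Vst →ₗ[ℂ] ℂ :=
  Finsupp.lsum ℂ fun i => LinearMap.toSpanSingleton ℂ (Vst →ₗ[ℂ] ℂ) (Finsupp.lapply i)

theorem Bstd_apply (x y : Vst) : Bstd x y = x.sum fun i a => a * y i := by
  simp [Bstd, Finsupp.lapply, Finsupp.sum, smul_eq_mul]

namespace LinearMap.SeparatingRight

variable {R M N : Type*} [CommRing R] [AddCommGroup M] [Module R M] [AddCommGroup N]
  [Module R N] {B : M →ₗ[R] N →ₗ[R] R}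

theorem eq_of_forall_apply_eq (hB : B.SeparatingRight) {x y : N}
    (h : ∀ w, B w x = B w y) : x = y :=
  sub_eq_zero.1 <| hB _ fun w => by rw [map_sub, h, sub_self]

theorem injective_flip (hB : B.SeparatingRight) : Function.Injective B.flip :=
  fun _ _ hxy => hB.eq_of_forall_apply_eq fun w => LinearMap.congr_fun hxy w

end LinearMap.SeparatingRight

namespace glMackey

section Transpose

variable {B : U →ₗ[ℂ] W →ₗ[ℂ] ℂ}

theorem mem_of_forall_exists {φ : Module.End ℂ U} (hφ : ∀ x, ∃ u, ∀ w, B (φ w) x = B w u) :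
    φ ∈ glMackey B := by
  rintro ξ ⟨x, rfl⟩
  obtain ⟨u, hu⟩ := hφ x
  exact ⟨u, LinearMap.ext fun w => (hu w).symm⟩

variable (B) in
def rankOne (x : U) (y : W) : glMackey B :=
  ⟨(B.flip y).smulRight x, mem_of_forall_exists fun z =>
    ⟨B x z • y, fun w => by simp [mul_comm]⟩⟩

@[simp]
theorem rankOne_apply (x : U) (y : W) (u : U) :
    (rankOne B x y : Module.End ℂ U) u = B u y • x :=
  rfl

noncomputable def transpose (hB : B.SeparatingRight) (φ : Module.End ℂ U)
    (hφ : φ ∈ glMackey B) : Module.End ℂ W :=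
  (LinearEquiv.ofInjective B.flip hB.injective_flip).symm ∘ₗ
    φ.dualMap.restrict (fun ξ hξ => hφ ξ hξ) ∘ₗ B.flip.rangeRestrict

theorem apply_transpose (hB : B.SeparatingRight) {φ : Module.End ℂ U} (hφ : φ ∈ glMackey B)
    (w : U) (x : W) : B w (transpose hB φ hφ x) = B (φ w) x :=
  LinearMap.congr_fun (LinearEquiv.ofInjective_symm_apply (h := hB.injective_flip) _ _) w

noncomputable def contragredient (hB : B.SeparatingRight) (e : U ≃ₗ[ℂ] U)
    (he : (e : Module.End ℂ U) ∈ glMackey B) (he' : (e.symm : Module.End ℂ U) ∈ glMackey B) :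
    W ≃ₗ[ℂ] W :=
  .ofLinearMap (transpose hB e.symm he') (transpose hB e he)
    (LinearMap.ext fun _ => hB.eq_of_forall_apply_eq fun _ => by simp [apply_transpose])
    (LinearMap.ext fun _ => hB.eq_of_forall_apply_eq fun _ => by simp [apply_transpose])

section Contragredient

variable (hB : B.SeparatingRight) (e : U ≃ₗ[ℂ] U) (he : (e : Module.End ℂ U) ∈ glMackey B)
  (he' : (e.symm : Module.End ℂ U) ∈ glMackey B)

theorem apply_contragredient (w : U) (x : W) :
    B w (contragredient hB e he he' x) = B (e.symm w) x :=
  apply_transpose hB he' w x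

theorem apply_contragredient_symm (w : U) (x : W) :
    B w ((contragredient hB e he he').symm x) = B (e w) x :=
  apply_transpose hB he w x

end Contragredient

end Transpose

section Symmetric

variable {B : U →ₗ[ℂ] U →ₗ[ℂ] ℂ}

theorem dualMap_contragredient_flip (hBs : LinearMap.BilinForm.IsSymm B)
    (hB : B.SeparatingRight) (e : U ≃ₗ[ℂ] U) (he : (e : Module.End ℂ U) ∈ glMackey B)
    (he' : (e.symm : Module.End ℂ U) ∈ glMackey B)
    (x : U) :
    (contragredient hB e he he' : Module.End ℂ U).dualMap (B.flip x) = B.flip (e.symm x) :=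
  LinearMap.ext fun w => by
    rw [LinearMap.dualMap_apply, LinearMap.flip_apply, LinearMap.flip_apply, LinearEquiv.coe_coe,
      hBs.eq, apply_contragredient, hBs.eq]

theorem map_dualMap_contragredient_range_flip (hBs : LinearMap.BilinForm.IsSymm B)
    (hB : B.SeparatingRight) (e : U ≃ₗ[ℂ] U) (he : (e : Module.End ℂ U) ∈ glMackey B)
    (he' : (e.symm : Module.End ℂ U) ∈ glMackey B) :
    (LinearMap.range B.flip).map (contragredient hB e he he' : Module.End ℂ U).dualMap =
      LinearMap.range B.flip := by
  have hcomp : (contragredient hB e he he' : Module.End ℂ U).dualMap ∘ₗ B.flip =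
      B.flip ∘ₗ (e.symm : U →ₗ[ℂ] U) :=
    LinearMap.ext (dualMap_contragredient_flip hBs hB e he he')
  rw [← LinearMap.range_comp, hcomp, LinearMap.range_comp_of_range_eq_top _ e.symm.range]

section TwistedDual

variable [Nontrivial U]

theorem coe_mem_of_twisted_dual (hBs : LinearMap.BilinForm.IsSymm B) (hB : B.SeparatingRight)
    (h : glMackey B ≃ₗ⁅ℂ⁆ glMackey B) (g : U ≃ₗ[ℂ] U)
    (hg : ∀ φ w v, B w (g ((h φ : Module.End ℂ U) v)) = -B ((φ : Module.End ℂ U) w) (g v)) :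
    (g : Module.End ℂ U) ∈ glMackey B := by
  obtain ⟨e, he⟩ := exists_ne (0 : U)
  obtain ⟨y, hy⟩ : ∃ y, B e y ≠ 0 := by
    by_contra! h0
    exact he (hB e fun w => by rw [hBs.eq]; exact h0 w)
  refine mem_of_forall_exists fun x => ?_
  set φ := rankOne B x (g e)
  have hφ : ∀ v, (h φ : Module.End ℂ U) v = -B x (g v) • e := fun v =>
    g.injective <| hB.eq_of_forall_apply_eq fun w => by
      rw [hg, rankOne_apply]
      simp only [map_smul, LinearMap.smul_apply, smul_eq_mul]
      ring
  -- `h φ` has rank one, so `(h φ)ᵀ y` is a multiple of `gᵀ x`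
  refine ⟨-(B e y)⁻¹ • transpose hB (h φ) (h φ).2 y, fun w => ?_⟩
  rw [map_smul, apply_transpose, hφ, hBs.eq]
  simp only [LinearEquiv.coe_coe, map_smul, LinearMap.smul_apply, smul_eq_mul]
  field_simp

theorem coe_symm_mem_of_twisted_dual (hBs : LinearMap.BilinForm.IsSymm B)
    (hB : B.SeparatingRight) (h : glMackey B ≃ₗ⁅ℂ⁆ glMackey B) (g : U ≃ₗ[ℂ] U)
    (hg : ∀ φ w v, B w (g ((h φ : Module.End ℂ U) v)) = -B ((φ : Module.End ℂ U) w) (g v)) :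
    (g.symm : Module.End ℂ U) ∈ glMackey B := by
  obtain ⟨e, he⟩ := exists_ne (0 : U)
  obtain ⟨w, hw⟩ : ∃ w, B w (g e) ≠ 0 := by
    by_contra! h0
    exact he (g.map_eq_zero_iff.1 (hB _ h0))
  refine mem_of_forall_exists fun x => ?_
  set φ := h.symm (rankOne B e x)
  refine ⟨-(B w (g e))⁻¹ • (φ : Module.End ℂ U) w, fun v => ?_⟩
  have key := hg φ w (g.symm v)
  rw [h.apply_symm_apply, rankOne_apply, map_smul, map_smul, g.apply_symm_apply,
    hBs.eq ((φ : Module.End ℂ U) w)] at key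
  rw [map_smul, smul_eq_mul, neg_mul, ← mul_neg, ← key, smul_eq_mul, LinearEquiv.coe_coe]
  field_simp

theorem exists_conj_of_twisted_dual (hBs : LinearMap.BilinForm.IsSymm B)
    (hB : B.SeparatingRight) (h : glMackey B ≃ₗ⁅ℂ⁆ glMackey B) (g : U ≃ₗ[ℂ] U)
    (hg : ∀ (φ : glMackey B) (v : U),
      B.flip (g ((h φ : Module.End ℂ U) v)) = -(φ : Module.End ℂ U).dualMap (B.flip (g v))) :
    ∃ f : U ≃ₗ[ℂ] U,
      (LinearMap.range B.flip).map (f : U →ₗ[ℂ] U).dualMap = LinearMap.range B.flip ∧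
      ∀ (φ : glMackey B) (v : U), (h φ : Module.End ℂ U).dualMap (B.flip v) =
        -B.flip (f.symm ((φ : Module.End ℂ U) (f v))) := by
  have hg' : ∀ φ w v, B w (g ((h φ : Module.End ℂ U) v)) = -B ((φ : Module.End ℂ U) w) (g v) :=
    fun φ w v => LinearMap.congr_fun (hg φ v) w
  have hgM := coe_mem_of_twisted_dual hBs hB h g hg'
  have hgM' := coe_symm_mem_of_twisted_dual hBs hB h g hg'
  set f := contragredient hB g hgM hgM'
  refine ⟨f, map_dualMap_contragredient_range_flip hBs hB g hgM hgM', fun φ v => ?_⟩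
  ext w
  calc B ((h φ : Module.End ℂ U) w) v
      = B (g.symm (g ((h φ : Module.End ℂ U) w))) v := by rw [g.symm_apply_apply]
    _ = B (g ((h φ : Module.End ℂ U) w)) (f v) := (apply_contragredient hB g hgM hgM' _ _).symm
    _ = -B ((φ : Module.End ℂ U) (f v)) (g w) := by rw [hBs.eq, hg']
    _ = -B w (f.symm ((φ : Module.End ℂ U) (f v))) := by
      rw [hBs.eq, apply_contragredient_symm]

end TwistedDual

end Symmetric

end glMackey

theorem Bstd_single_one (i : ℕ) (y : Vst) : Bstd (Finsupp.single i 1) y = y i := by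
  rw [Bstd_apply, Finsupp.sum_single_index] <;> simp

theorem Bstd_isSymm : LinearMap.BilinForm.IsSymm Bstd := by
  refine ⟨fun x y => ?_⟩
  rw [Bstd_apply, Bstd_apply,
    Finsupp.sum_of_support_subset x (Finset.subset_union_left (s₂ := y.support))
      (fun i a => a * y i) fun i _ => zero_mul _,
    Finsupp.sum_of_support_subset y (Finset.subset_union_right (s₁ := x.support))
      (fun i a => a * x i) fun i _ => zero_mul _, Finset.union_comm]
  exact Finset.sum_congr rfl fun i _ => mul_comm _ _

theorem Bstd_separatingRight : Bstd.SeparatingRight := fun y hy =>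
  Finsupp.ext fun i => by rw [← Bstd_single_one, hy, Finsupp.coe_zero, Pi.zero_apply]

/-- If `h` is a Lie algebra automorphism of `gl^M_∞` and `g : V ≃ V` witnesses an
isomorphism of twisted modules `V^h ≅ V_*` (i.e. `j (g ((h φ) v)) = −φ* (j (g v))`,
where `j = Bstd.flip`), then there is `f : V ≃ V` whose dual map carries
`V_* = range j` onto itself, with `(τ ∘ h)(φ) = f⁻¹ ∘ φ ∘ f` for all `φ`; at the level
of `j` the latter reads `(h φ)* (j v) = −j (f⁻¹ (φ (f v)))`. -/
theorem stmt_17 (h : ↥(glMackey Bstd) ≃ₗ⁅ℂ⁆ ↥(glMackey Bstd))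
    (g : Vst ≃ₗ[ℂ] Vst)
    (hg : ∀ (φ : ↥(glMackey Bstd)) (v : Vst),
      Bstd.flip (g ((h φ : Module.End ℂ Vst) v))
        = - LinearMap.dualMap (φ : Module.End ℂ Vst) (Bstd.flip (g v))) :
    ∃ f : Vst ≃ₗ[ℂ] Vst,
      Submodule.map (LinearMap.dualMap (f : Vst →ₗ[ℂ] Vst)) (LinearMap.range Bstd.flip)
          = LinearMap.range Bstd.flip ∧
      ∀ (φ : ↥(glMackey Bstd)) (v : Vst),
        LinearMap.dualMap (h φ : Module.End ℂ Vst) (Bstd.flip v)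
          = - Bstd.flip (f.symm ((φ : Module.End ℂ Vst) (f v))) :=
  glMackey.exists_conj_of_twisted_dual Bstd_isSymm Bstd_separatingRight h g hg
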